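/- Let risks satisfy the usual triangle-type inequality ε_D(h) ≤ ε_D(h') + Pr_{x∼D}[h(x) ≠ h'(x)] for binary h, h' and labeling f. Then for source distribution S and target distribution T with shared hypothesis class H, for any h, h' ∈ H: ε_T(h) ≤ ε_T(h') + Pr_{x∼S}[h(x) ≠ h'(x)] + (1/2) d_{HΔH}(S, T). -/
import Mathlib


open MeasureTheory

/-- The H-delta-H divergence between two measures. -/
noncomputable def dHdH {X : Type*} [MeasurableSpace X]
    (H : Set (X → Bool)) (P Q : Measure X) : ℝ :=
  2 * ⨆ p : H × H,
    |(P {x | (p.1 : X → Bool) x ≠ (p.2 : X → Bool) x}).toReal -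
      (Q {x | (p.1 : X → Bool) x ≠ (p.2 : X → Bool) x}).toReal|

/-- Target risk bound: `ε_T(h) ≤ ε_T(h') + Pr_S[h ≠ h'] + ½ d_{HΔH}(S, T)`. -/
theorem target_risk_bound {X : Type*} [MeasurableSpace X]
    (H : Set (X → Bool)) (S T : Measure X)
    [IsProbabilityMeasure S] [IsProbabilityMeasure T]
    (f : X → Bool) (h h' : X → Bool) (hh : h ∈ H) (hh' : h' ∈ H) :
    (T {x | h x ≠ f x}).toReal ≤
      (T {x | h' x ≠ f x}).toReal + (S {x | h x ≠ h' x}).toReal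
        + (1 / 2) * dHdH H S T := by
  have hsub : {x | h x ≠ f x} ⊆ {x | h' x ≠ f x} ∪ {x | h x ≠ h' x} := by
    intro x hx
    by_cases hc : h' x = f x
    · right; simp only [Set.mem_setOf_eq]; intro he; exact hx (he.trans hc)
    · left; exact hc
  have hfin : ∀ s : Set X, T s ≠ ⊤ := fun s => (measure_lt_top T s).ne
  have tri : (T {x | h x ≠ f x}).toReal ≤
      (T {x | h' x ≠ f x}).toReal + (T {x | h x ≠ h' x}).toReal := by
    have := (measure_mono hsub).trans (measure_union_le (μ := T) _ _)
    have := ENNReal.toReal_mono (ENNReal.add_ne_top.mpr ⟨hfin _, hfin _⟩) this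
    rwa [ENNReal.toReal_add (hfin _) (hfin _)] at this
  have key : (T {x | h x ≠ h' x}).toReal ≤
      (S {x | h x ≠ h' x}).toReal + (1 / 2) * dHdH H S T := by
    have hbdd : BddAbove (Set.range fun p : H × H =>
        |(S {x | (p.1 : X → Bool) x ≠ (p.2 : X → Bool) x}).toReal -
          (T {x | (p.1 : X → Bool) x ≠ (p.2 : X → Bool) x}).toReal|) := by
      refine ⟨2, ?_⟩
      rintro r ⟨p, rfl⟩
      have h1 : (S {x | (p.1 : X → Bool) x ≠ (p.2 : X → Bool) x}).toReal ≤ 1 := by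
        have := prob_le_one (μ := S) (s := {x | (p.1 : X → Bool) x ≠ (p.2 : X → Bool) x})
        simpa using ENNReal.toReal_mono (by simp) this
      have h2 : (T {x | (p.1 : X → Bool) x ≠ (p.2 : X → Bool) x}).toReal ≤ 1 := by
        have := prob_le_one (μ := T) (s := {x | (p.1 : X → Bool) x ≠ (p.2 : X → Bool) x})
        simpa using ENNReal.toReal_mono (by simp) this
      have h1' : 0 ≤ (S {x | (p.1 : X → Bool) x ≠ (p.2 : X → Bool) x}).toReal :=
        ENNReal.toReal_nonneg
      have h2' : 0 ≤ (T {x | (p.1 : X → Bool) x ≠ (p.2 : X → Bool) x}).toReal :=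
        ENNReal.toReal_nonneg
      rw [abs_sub_le_iff]
      constructor <;> linarith
    have hle : |(S {x | h x ≠ h' x}).toReal - (T {x | h x ≠ h' x}).toReal| ≤
        ⨆ p : H × H,
          |(S {x | (p.1 : X → Bool) x ≠ (p.2 : X → Bool) x}).toReal -
            (T {x | (p.1 : X → Bool) x ≠ (p.2 : X → Bool) x}).toReal| :=
      le_ciSup hbdd (⟨⟨h, hh⟩, ⟨h', hh'⟩⟩ : H × H)
    have habs : (T {x | h x ≠ h' x}).toReal - (S {x | h x ≠ h' x}).toReal ≤
        |(S {x | h x ≠ h' x}).toReal - (T {x | h x ≠ h' x}).toReal| := by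
      rw [abs_sub_comm]; exact le_abs_self _
    unfold dHdH
    linarith
  linarith
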